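/- arXiv:2002.10716 — 9 statements merged into one kernel-verified Lean document; each statement's English description precedes it below -/
import Mathlib

section
/- The difference in standard errors of the standard and augmented minimum-norm estimators satisfies the exact identity L_std(θ̂_std) − L_std(θ̂_aug) = vᵀΣv + 2wᵀΣv, where v = Π⊥_std Π_aug θ⋆ and w = Π⊥_aug θ⋆. -/
open Matrix BigOperators

/-- Standard (population) error of `θ` w.r.t. covariance `S` and true parameter `θstar`:
`(θ − θ⋆)ᵀ Σ (θ − θ⋆)`. -/
def Lstd {d : ℕ} (S : Matrix (Fin d) (Fin d) ℝ) (θstar θ : Fin d → ℝ) : ℝ :=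
  (θ - θstar) ⬝ᵥ S.mulVec (θ - θstar)

/-- `θ` is the minimum Euclidean-norm solution of the constraint `C`. -/
def IsMinNormInterp {d : ℕ} (C : (Fin d → ℝ) → Prop) (θ : Fin d → ℝ) : Prop :=
  C θ ∧ ∀ θ', C θ' → θ ⬝ᵥ θ ≤ θ' ⬝ᵥ θ'

/-- `P` is the orthogonal projection matrix onto `Null(X)`:
symmetric, idempotent, range contained in `Null(X)`, and fixing `Null(X)`. -/
def IsOrthProjNull {n d : ℕ} (X : Matrix (Fin n) (Fin d) ℝ)
    (P : Matrix (Fin d) (Fin d) ℝ) : Prop :=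
  Pᵀ = P ∧ P * P = P ∧ (∀ v, X.mulVec (P.mulVec v) = 0) ∧
    (∀ v, X.mulVec v = 0 → P.mulVec v = v)

/-- `P` is the orthogonal projection matrix onto `Null(X1) ∩ Null(X2)`. -/
def IsOrthProjNull2 {n m d : ℕ} (X1 : Matrix (Fin n) (Fin d) ℝ)
    (X2 : Matrix (Fin m) (Fin d) ℝ) (P : Matrix (Fin d) (Fin d) ℝ) : Prop :=
  Pᵀ = P ∧ P * P = P ∧ (∀ v, X1.mulVec (P.mulVec v) = 0 ∧ X2.mulVec (P.mulVec v) = 0) ∧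
    (∀ v, X1.mulVec v = 0 → X2.mulVec v = 0 → P.mulVec v = v)

/-- For a symmetric matrix, it can be moved across the dot product. -/
lemma sym_dot {d : ℕ} {M : Matrix (Fin d) (Fin d) ℝ} (hM : Mᵀ = M)
    (u v : Fin d → ℝ) : u ⬝ᵥ M.mulVec v = M.mulVec u ⬝ᵥ v := by
  rw [Matrix.dotProduct_mulVec]
  congr 1
  conv_lhs => rw [← hM]
  rw [Matrix.vecMul_transpose]

/-- Uniqueness of the min-norm solution: if `c` satisfies the constraint and is
orthogonal to `θ − c`, then `θ = c`. -/
lemma minnorm_unique {d : ℕ} (C : (Fin d → ℝ) → Prop) (θ c : Fin d → ℝ)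
    (hmin : IsMinNormInterp C θ) (hc : C c)
    (horth : c ⬝ᵥ (θ - c) = 0) : θ = c := by
  have h1 := hmin.2 c hc
  have expand : θ ⬝ᵥ θ = c ⬝ᵥ c + (θ - c) ⬝ᵥ (θ - c) + 2 * (c ⬝ᵥ (θ - c)) := by
    have h : θ = c + (θ - c) := by ring
    rw [h]
    simp only [add_dotProduct, dotProduct_add, dotProduct_comm (θ - c) c]
    ring
  have hz : (θ - c) ⬝ᵥ (θ - c) ≤ 0 := by
    rw [expand, horth] at h1; linarith
  have h0 : (θ - c) ⬝ᵥ (θ - c) = 0 :=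
    le_antisymm hz (Finset.sum_nonneg fun i _ => mul_self_nonneg _)
  exact sub_eq_zero.mp (dotProduct_self_eq_zero.mp h0)

/-- The min-norm solution is `(I − P)θ⋆` when `P` is a symmetric idempotent
fixing the difference `θ − (θ⋆ − Pθ⋆)` and `θ⋆ − Pθ⋆` satisfies the constraint. -/
lemma minnorm_proj {d : ℕ} (C : (Fin d → ℝ) → Prop)
    (P : Matrix (Fin d) (Fin d) ℝ) (hsym : Pᵀ = P) (hidem : P * P = P)
    (θ θstar : Fin d → ℝ) (hmin : IsMinNormInterp C θ)
    (hc : C (θstar - P.mulVec θstar))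
    (hfix : P.mulVec (θ - (θstar - P.mulVec θstar)) = θ - (θstar - P.mulVec θstar)) :
    θ = θstar - P.mulVec θstar := by
  apply minnorm_unique _ _ _ hmin hc
  rw [← hfix, sym_dot hsym, Matrix.mulVec_sub, Matrix.mulVec_mulVec, hidem,
    sub_self, zero_dotProduct]

/-- Theorem 1 (paper): exact identity for the difference of standard errors,
with `v = Pstd * (1 - Paug) * th` and `w = Paug * th`. -/
theorem standard_error_difference_identity {n m d : ℕ}
    (Xstd : Matrix (Fin n) (Fin d) ℝ) (Xext : Matrix (Fin m) (Fin d) ℝ)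
    (S : Matrix (Fin d) (Fin d) ℝ) (hS : S.PosSemidef)
    (θstar θstd θaug : Fin d → ℝ)
    (Pstd Paug : Matrix (Fin d) (Fin d) ℝ)
    (hPstd : IsOrthProjNull Xstd Pstd)
    (hPaug : IsOrthProjNull2 Xstd Xext Paug)
    (hstd : IsMinNormInterp (fun θ => Xstd.mulVec θ = Xstd.mulVec θstar) θstd)
    (haug : IsMinNormInterp
      (fun θ => Xstd.mulVec θ = Xstd.mulVec θstar ∧ Xext.mulVec θ = Xext.mulVec θstar) θaug) :
    Lstd S θstar θstd - Lstd S θstar θaug =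
      (Pstd.mulVec ((1 - Paug).mulVec θstar)) ⬝ᵥ
          S.mulVec (Pstd.mulVec ((1 - Paug).mulVec θstar)) +
        2 * ((Paug.mulVec θstar) ⬝ᵥ S.mulVec (Pstd.mulVec ((1 - Paug).mulVec θstar))) := by
  obtain ⟨hs1, hs2, hs3, hs4⟩ := hPstd
  obtain ⟨ha1, ha2, ha3, ha4⟩ := hPaug
  have hSsym : Sᵀ = S := hS.1.eq
  -- identify the two estimators
  have hθstd : θstd = θstar - Pstd.mulVec θstar := by
    apply minnorm_proj _ _ hs1 hs2 _ _ hstd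
    · show Xstd.mulVec _ = _
      rw [Matrix.mulVec_sub, hs3, sub_zero]
    · apply hs4
      rw [Matrix.mulVec_sub, Matrix.mulVec_sub, hs3, hstd.1, sub_zero, sub_self]
  have hθaug : θaug = θstar - Paug.mulVec θstar := by
    apply minnorm_proj _ _ ha1 ha2 _ _ haug
    · refine ⟨?_, ?_⟩
      · rw [Matrix.mulVec_sub, (ha3 θstar).1, sub_zero]
      · rw [Matrix.mulVec_sub, (ha3 θstar).2, sub_zero]
    · apply ha4
      · rw [Matrix.mulVec_sub, Matrix.mulVec_sub, (ha3 θstar).1, haug.1.1, sub_zero, sub_self]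
      · rw [Matrix.mulVec_sub, Matrix.mulVec_sub, (ha3 θstar).2, haug.1.2, sub_zero, sub_self]
  set a := Pstd.mulVec θstar with ha
  set b := Paug.mulVec θstar with hb
  -- Pstd fixes b since b ∈ Null(Xstd)
  have hPb : Pstd.mulVec b = b := hs4 _ (ha3 θstar).1
  have hv : Pstd.mulVec ((1 - Paug).mulVec θstar) = a - b := by
    rw [Matrix.sub_mulVec, Matrix.one_mulVec, Matrix.mulVec_sub, hPb]
  rw [hv, hθstd, hθaug]
  have hL1 : Lstd S θstar (θstar - a) = a ⬝ᵥ S.mulVec a := by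
    unfold Lstd
    have : θstar - a - θstar = -a := by ring
    rw [this, Matrix.mulVec_neg, neg_dotProduct, dotProduct_neg, neg_neg]
  have hL2 : Lstd S θstar (θstar - b) = b ⬝ᵥ S.mulVec b := by
    unfold Lstd
    have : θstar - b - θstar = -b := by ring
    rw [this, Matrix.mulVec_neg, neg_dotProduct, dotProduct_neg, neg_neg]
  rw [hL1, hL2]
  have hSab : a ⬝ᵥ S.mulVec b = b ⬝ᵥ S.mulVec a := by
    rw [sym_dot hSsym, dotProduct_comm]
  simp only [Matrix.mulVec_sub, dotProduct_sub, sub_dotProduct]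
  linarith
end

section
/- If the population covariance is the identity, Σ = I, then the augmented estimator never has larger standard error than the standard estimator: L_std(θ̂_aug) ≤ L_std(θ̂_std). -/
open Matrix BigOperators

/-!
With `Σ = I` the standard error is `‖θ - θ⋆‖²`. Minimality of the norm along every admissible
direction makes a min-norm interpolator orthogonal to the null space of its constraints. The
augmented error `θ̂_aug - θ⋆` lies in the null space of both data matrices, so both `θ̂_aug` and
`θ̂_std` are orthogonal to it, and `θ̂_std - θ⋆ = (θ̂_std - θ̂_aug) + (θ̂_aug - θ⋆)` is an
orthogonal decomposition. Pythagoras then gives `‖θ̂_aug - θ⋆‖ ≤ ‖θ̂_std - θ⋆‖`.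
-/

section DotProduct

variable {ι : Type*} [Fintype ι]

lemma dotProduct_self_nonneg (v : ι → ℝ) : 0 ≤ v ⬝ᵥ v := by
  simpa using dotProduct_star_self_nonneg v

lemma dotProduct_eq_zero_of_forall_dotProduct_self_le {θ v : ι → ℝ}
    (h : ∀ t : ℝ, θ ⬝ᵥ θ ≤ (θ + t • v) ⬝ᵥ (θ + t • v)) : θ ⬝ᵥ v = 0 := by
  set c := θ ⬝ᵥ v
  set q := v ⬝ᵥ v
  have hq : 0 ≤ q := dotProduct_self_nonneg v
  have hexpand : ∀ t : ℝ, (θ + t • v) ⬝ᵥ (θ + t • v) = θ ⬝ᵥ θ + 2 * t * c + t ^ 2 * q := by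
    intro t
    simp only [add_dotProduct, dotProduct_add, smul_dotProduct, dotProduct_smul, smul_eq_mul,
      dotProduct_comm v θ, c, q]
    ring
  -- Along `t = -c / (q + 1)` the increment `2 t c + t² q` equals `-c² (q + 2) / (q + 1)²`.
  have hmin := h (-c / (q + 1))
  rw [hexpand] at hmin
  have hq1 : 0 < q + 1 := by linarith
  have hc2 : c ^ 2 * (q + 2) ≤ 0 := by
    field_simp at hmin
    nlinarith
  nlinarith [sq_nonneg c]

lemma dotProduct_self_le_add_of_dotProduct_eq_zero {u v : ι → ℝ} (h : u ⬝ᵥ v = 0) :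
    v ⬝ᵥ v ≤ (u + v) ⬝ᵥ (u + v) := by
  have hu := dotProduct_self_nonneg u
  simp only [add_dotProduct, dotProduct_add, dotProduct_comm v u, h]
  linarith

end DotProduct

section MinNorm

variable {d : ℕ} {κ : Type*}

lemma IsMinNormInterp.dotProduct_eq_zero {C : (Fin d → ℝ) → Prop} {θ v : Fin d → ℝ}
    (h : IsMinNormInterp C θ) (hv : ∀ t : ℝ, C (θ + t • v)) : θ ⬝ᵥ v = 0 :=
  dotProduct_eq_zero_of_forall_dotProduct_self_le fun t => h.2 _ (hv t)

lemma mulVec_sub_eq_zero_of_mulVec_eq {X : Matrix κ (Fin d) ℝ} {θ θstar : Fin d → ℝ}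
    (h : X *ᵥ θ = X *ᵥ θstar) : X *ᵥ (θ - θstar) = 0 := by
  rw [mulVec_sub, h, sub_self]

lemma mulVec_add_smul_eq_of_mulVec_eq_zero {X : Matrix κ (Fin d) ℝ} {θ θstar v : Fin d → ℝ}
    (h : X *ᵥ θ = X *ᵥ θstar) (hv : X *ᵥ v = 0) (t : ℝ) : X *ᵥ (θ + t • v) = X *ᵥ θstar := by
  rw [mulVec_add, mulVec_smul, hv, smul_zero, add_zero, h]

end MinNorm

theorem identity_covariance_augmentation_safe_general {n m d : ℕ}
    (Xstd : Matrix (Fin n) (Fin d) ℝ) (Xext : Matrix (Fin m) (Fin d) ℝ)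
    (S : Matrix (Fin d) (Fin d) ℝ) (hSI : S = 1)
    (θstar θstd θaug : Fin d → ℝ)
    (hstd : IsMinNormInterp (fun θ => Xstd.mulVec θ = Xstd.mulVec θstar) θstd)
    (haug : IsMinNormInterp
      (fun θ => Xstd.mulVec θ = Xstd.mulVec θstar ∧ Xext.mulVec θ = Xext.mulVec θstar) θaug) :
    Lstd S θstar θaug ≤ Lstd S θstar θstd := by
  obtain ⟨haug_std, haug_ext⟩ := haug.1
  have hstd_null := mulVec_sub_eq_zero_of_mulVec_eq haug_std
  have hext_null := mulVec_sub_eq_zero_of_mulVec_eq haug_ext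
  have haug_orth : θaug ⬝ᵥ (θaug - θstar) = 0 := haug.dotProduct_eq_zero fun t =>
    ⟨mulVec_add_smul_eq_of_mulVec_eq_zero haug_std hstd_null t,
      mulVec_add_smul_eq_of_mulVec_eq_zero haug_ext hext_null t⟩
  have hstd_orth : θstd ⬝ᵥ (θaug - θstar) = 0 :=
    hstd.dotProduct_eq_zero (mulVec_add_smul_eq_of_mulVec_eq_zero hstd.1 hstd_null)
  have hdecomp : θstd - θstar = (θstd - θaug) + (θaug - θstar) := by abel
  simp only [Lstd, hSI, one_mulVec]
  rw [hdecomp]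
  exact dotProduct_self_le_add_of_dotProduct_eq_zero (by
    rw [sub_dotProduct, hstd_orth, haug_orth, sub_self])

/-- Corollary 2, condition 1 (paper): if the population covariance is the identity,
the augmented estimator never has larger standard error than the standard estimator. -/
theorem identity_covariance_augmentation_safe {n m d : ℕ}
    (Xstd : Matrix (Fin n) (Fin d) ℝ) (Xext : Matrix (Fin m) (Fin d) ℝ)
    (S : Matrix (Fin d) (Fin d) ℝ) (hS : S.PosSemidef) (hSI : S = 1)
    (θstar θstd θaug : Fin d → ℝ)
    (hstd : IsMinNormInterp (fun θ => Xstd.mulVec θ = Xstd.mulVec θstar) θstd)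
    (haug : IsMinNormInterp
      (fun θ => Xstd.mulVec θ = Xstd.mulVec θstar ∧ Xext.mulVec θ = Xext.mulVec θstar) θaug) :
    Lstd S θstar θaug ≤ Lstd S θstar θstd :=
  identity_covariance_augmentation_safe_general Xstd Xext S hSI θstar θstd θaug hstd haug
end

section
/- Suppose the extra data is a single point, i.e. X_ext consists of the single row x_extᵀ, set v = Π⊥_std x_ext, and suppose v ≠ 0 and there exists w ∈ Null(X_std) with wᵀ x_ext = 0 and wᵀ Σ v ≠ 0 (in particular v is a mixture of eigenvectors of Σ with different eigenvalues, not an eigenvector). Then there exists a true parameter θ⋆ ∈ ℝ^d for which augmentation strictly increases the standard error: L_std(θ̂_aug) > L_std(θ̂_std). -/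
open Matrix BigOperators

/-! Take `θstar = w + b • v` with `v = Pstd xext`. It lies in `Null(Xstd)`, so the standard
estimator is `0`, with error `θstarᵀ Σ θstar`; since `w ⟂ v`, the augmented estimator is the
projection `b • v` of `θstar` onto `v`, with error `wᵀ Σ w`. The first error is a quadratic in `b`
with slope `2 wᵀ Σ v ≠ 0` at `b = 0`, so for a suitable `b` it is below `wᵀ Σ w`. -/

lemma exists_two_mul_mul_add_sq_mul_neg {c : ℝ} (hc : c ≠ 0) (q : ℝ) :
    ∃ b : ℝ, 2 * b * c + b ^ 2 * q < 0 := by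
  have ht : 0 < |q| + 1 := by positivity
  refine ⟨-c / (|q| + 1), ?_⟩
  have hform : 2 * (-c / (|q| + 1)) * c + (-c / (|q| + 1)) ^ 2 * q
      = c ^ 2 * (q - 2 * (|q| + 1)) / (|q| + 1) ^ 2 := by
    field_simp; ring
  rw [hform]
  apply div_neg_of_neg_of_pos _ (by positivity)
  exact mul_neg_of_pos_of_neg (by positivity) (by linarith [le_abs_self q])

lemma Matrix.IsSymm.add_smul_dotProduct_mulVec_add_smul {ι R : Type*} [Fintype ι] [CommRing R]
    {S : Matrix ι ι R} (hS : S.IsSymm) (w v : ι → R) (b : R) :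
    (w + b • v) ⬝ᵥ S *ᵥ (w + b • v)
      = w ⬝ᵥ S *ᵥ w + 2 * b * (w ⬝ᵥ S *ᵥ v) + b ^ 2 * (v ⬝ᵥ S *ᵥ v) := by
  have hvw : v ⬝ᵥ S *ᵥ w = w ⬝ᵥ S *ᵥ v := by
    rw [← dotProduct_transpose_mulVec, hS.eq]
  simp only [mulVec_add, mulVec_smul, add_dotProduct, dotProduct_add, smul_dotProduct,
    dotProduct_smul, smul_eq_mul, hvw]
  ring

lemma Matrix.IsSymm.exists_add_smul_dotProduct_mulVec_lt {ι : Type*} [Fintype ι]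
    {S : Matrix ι ι ℝ} (hS : S.IsSymm) {w v : ι → ℝ} (h : w ⬝ᵥ S *ᵥ v ≠ 0) :
    ∃ b : ℝ, (w + b • v) ⬝ᵥ S *ᵥ (w + b • v) < w ⬝ᵥ S *ᵥ w := by
  obtain ⟨b, hb⟩ := exists_two_mul_mul_add_sq_mul_neg h (v ⬝ᵥ S *ᵥ v)
  exact ⟨b, by rw [hS.add_smul_dotProduct_mulVec_add_smul]; linarith⟩

lemma Lstd_sub_left {d : ℕ} (S : Matrix (Fin d) (Fin d) ℝ) (θ u : Fin d → ℝ) :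
    Lstd S θ (θ - u) = u ⬝ᵥ S *ᵥ u := by
  simp [Lstd, mulVec_neg]

lemma IsMinNormInterp.of_dotProduct_sub_eq_zero {d : ℕ} {C : (Fin d → ℝ) → Prop}
    {θ : Fin d → ℝ} (hθ : C θ) (horth : ∀ θ', C θ' → θ ⬝ᵥ (θ' - θ) = 0) :
    IsMinNormInterp C θ := by
  refine ⟨hθ, fun θ' hθ' => ?_⟩
  have hpyth : θ' ⬝ᵥ θ' = θ ⬝ᵥ θ + 2 * (θ ⬝ᵥ (θ' - θ)) + (θ' - θ) ⬝ᵥ (θ' - θ) := by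
    simp only [dotProduct_sub, sub_dotProduct, dotProduct_comm θ' θ]
    ring
  have hnonneg : 0 ≤ (θ' - θ) ⬝ᵥ (θ' - θ) := by
    simpa using dotProduct_star_self_nonneg (θ' - θ)
  rw [hpyth, horth θ' hθ']
  linarith

namespace IsOrthProjNull

variable {n d : ℕ} {X : Matrix (Fin n) (Fin d) ℝ} {P : Matrix (Fin d) (Fin d) ℝ}

lemma mulVec_mulVec_eq_zero (hP : IsOrthProjNull X P) (a : Fin d → ℝ) : X *ᵥ (P *ᵥ a) = 0 :=
  hP.2.2.1 a

lemma mulVec_eq_self (hP : IsOrthProjNull X P) {u : Fin d → ℝ} (hu : X *ᵥ u = 0) :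
    P *ᵥ u = u :=
  hP.2.2.2 u hu

lemma dotProduct_mulVec_comm (hP : IsOrthProjNull X P) (a b : Fin d → ℝ) :
    a ⬝ᵥ P *ᵥ b = P *ᵥ a ⬝ᵥ b := by
  rw [← dotProduct_transpose_mulVec, hP.1, dotProduct_comm]

lemma mulVec_mulVec_self (hP : IsOrthProjNull X P) (a : Fin d → ℝ) :
    P *ᵥ (P *ᵥ a) = P *ᵥ a := by
  rw [mulVec_mulVec, hP.2.1]

lemma dotProduct_mulVec_self (hP : IsOrthProjNull X P) (a : Fin d → ℝ) :
    a ⬝ᵥ P *ᵥ a = P *ᵥ a ⬝ᵥ P *ᵥ a := by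
  rw [← hP.mulVec_mulVec_self a, hP.dotProduct_mulVec_comm, hP.mulVec_mulVec_self]

lemma sub_mulVec_dotProduct_eq_zero (hP : IsOrthProjNull X P) (θ : Fin d → ℝ)
    {u : Fin d → ℝ} (hu : X *ᵥ u = 0) : (θ - P *ᵥ θ) ⬝ᵥ u = 0 := by
  rw [sub_dotProduct, ← hP.dotProduct_mulVec_comm, hP.mulVec_eq_self hu, sub_self]

lemma isMinNormInterp_sub_mulVec (hP : IsOrthProjNull X P) (θstar : Fin d → ℝ) :
    IsMinNormInterp (fun θ => X *ᵥ θ = X *ᵥ θstar) (θstar - P *ᵥ θstar) := by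
  refine IsMinNormInterp.of_dotProduct_sub_eq_zero ?_ fun θ' hθ' => ?_
  · rw [mulVec_sub, hP.mulVec_mulVec_eq_zero, sub_zero]
  · apply hP.sub_mulVec_dotProduct_eq_zero
    rw [mulVec_sub, mulVec_sub, hP.mulVec_mulVec_eq_zero, hθ', sub_zero, sub_self]

lemma isMinNormInterp_sub_mulVec_add_smul (hP : IsOrthProjNull X P) (a θstar : Fin d → ℝ) :
    IsMinNormInterp (fun θ => X *ᵥ θ = X *ᵥ θstar ∧ a ⬝ᵥ θ = a ⬝ᵥ θstar)
      (θstar - P *ᵥ θstar + ((P *ᵥ a ⬝ᵥ θstar) / (P *ᵥ a ⬝ᵥ P *ᵥ a)) • P *ᵥ a) := by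
  set v := P *ᵥ a
  set t := (v ⬝ᵥ θstar) / (v ⬝ᵥ v)
  set θaug := θstar - P *ᵥ θstar + t • v
  -- when `v = 0`, `t` is the junk value `0 / 0 = 0`
  have ht : t * (v ⬝ᵥ v) = v ⬝ᵥ θstar := by
    by_cases hv : v = 0
    · simp [hv]
    · exact div_mul_cancel₀ _ (dotProduct_self_eq_zero.not.mpr hv)
  have hX : X *ᵥ θaug = X *ᵥ θstar := by
    rw [mulVec_add, mulVec_sub, mulVec_smul, hP.mulVec_mulVec_eq_zero,
      hP.mulVec_mulVec_eq_zero, smul_zero, sub_zero, add_zero]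
  have ha : a ⬝ᵥ θaug = a ⬝ᵥ θstar := by
    rw [dotProduct_add, dotProduct_sub, dotProduct_smul, hP.dotProduct_mulVec_comm,
      hP.dotProduct_mulVec_self, smul_eq_mul, ht, sub_add_cancel]
  refine IsMinNormInterp.of_dotProduct_sub_eq_zero ⟨hX, ha⟩ fun θ' ⟨hX', ha'⟩ => ?_
  have hXu : X *ᵥ (θ' - θaug) = 0 := by rw [mulVec_sub, hX', hX, sub_self]
  have hau : a ⬝ᵥ (θ' - θaug) = 0 := by rw [dotProduct_sub, ha', ha, sub_self]
  rw [add_dotProduct, hP.sub_mulVec_dotProduct_eq_zero θstar hXu, smul_dotProduct,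
    ← hP.dotProduct_mulVec_comm, hP.mulVec_eq_self hXu, hau, smul_zero, zero_add]

end IsOrthProjNull

theorem mixture_eigenvector_augmentation_hurts_general {n d : ℕ}
    (Xstd : Matrix (Fin n) (Fin d) ℝ)
    (S : Matrix (Fin d) (Fin d) ℝ) (hS : S.PosSemidef)
    (Pstd : Matrix (Fin d) (Fin d) ℝ) (hPstd : IsOrthProjNull Xstd Pstd)
    (xext w : Fin d → ℝ)
    (hw1 : Xstd.mulVec w = 0)
    (hw2 : w ⬝ᵥ xext = 0)
    (hw3 : w ⬝ᵥ S.mulVec (Pstd.mulVec xext) ≠ 0) :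
    ∃ (θstar θstd θaug : Fin d → ℝ),
      IsMinNormInterp (fun θ => Xstd.mulVec θ = Xstd.mulVec θstar) θstd ∧
      IsMinNormInterp
        (fun θ => Xstd.mulVec θ = Xstd.mulVec θstar ∧ xext ⬝ᵥ θ = xext ⬝ᵥ θstar) θaug ∧
      Lstd S θstar θstd < Lstd S θstar θaug := by
  set v := Pstd *ᵥ xext
  obtain ⟨b, hb⟩ :=
    (isHermitian_iff_isSymm.mp hS.isHermitian).exists_add_smul_dotProduct_mulVec_lt hw3
  set θstar := w + b • v
  have hPθ : Pstd *ᵥ θstar = θstar := hPstd.mulVec_eq_self <| by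
    rw [mulVec_add, mulVec_smul, hw1, hPstd.mulVec_mulVec_eq_zero, smul_zero, add_zero]
  have hvv : v ⬝ᵥ v ≠ 0 := fun h => hw3 <| by
    rw [dotProduct_self_eq_zero.mp h, mulVec_zero, dotProduct_zero]
  have hvw : v ⬝ᵥ w = 0 := by
    rw [dotProduct_comm, hPstd.dotProduct_mulVec_comm, hPstd.mulVec_eq_self hw1, hw2]
  have hθaug : θstar - Pstd *ᵥ θstar + ((v ⬝ᵥ θstar) / (v ⬝ᵥ v)) • v = θstar - w := by
    rw [hPθ, dotProduct_add, dotProduct_smul, hvw, smul_eq_mul, zero_add, mul_div_assoc,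
      div_self hvv, mul_one, sub_self, zero_add, add_sub_cancel_left]
  refine ⟨θstar, _, _, hPstd.isMinNormInterp_sub_mulVec θstar,
    hPstd.isMinNormInterp_sub_mulVec_add_smul xext θstar, ?_⟩
  rw [hθaug, hPθ, Lstd_sub_left, Lstd_sub_left]
  exact hb

/-- Corollary characterization (b), second part, of the paper: if the projection
`v = Pstd x_ext` of a single extra point is nonzero and there is `w` in the null space
of the standard data with `w ⟂ x_ext` and `wᵀ Σ v ≠ 0` (so `v` is a mixture of
eigenvectors of `Σ` with different eigenvalues), then there exists a true parameter
for which augmentation strictly increases the standard error. -/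
theorem mixture_eigenvector_augmentation_hurts {n d : ℕ}
    (Xstd : Matrix (Fin n) (Fin d) ℝ)
    (S : Matrix (Fin d) (Fin d) ℝ) (hS : S.PosSemidef)
    (Pstd : Matrix (Fin d) (Fin d) ℝ) (hPstd : IsOrthProjNull Xstd Pstd)
    (xext w : Fin d → ℝ)
    (hv : Pstd.mulVec xext ≠ 0)
    (hw1 : Xstd.mulVec w = 0)
    (hw2 : w ⬝ᵥ xext = 0)
    (hw3 : w ⬝ᵥ S.mulVec (Pstd.mulVec xext) ≠ 0) :
    ∃ (θstar θstd θaug : Fin d → ℝ),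
      IsMinNormInterp (fun θ => Xstd.mulVec θ = Xstd.mulVec θstar) θstd ∧
      IsMinNormInterp
        (fun θ => Xstd.mulVec θ = Xstd.mulVec θstar ∧ xext ⬝ᵥ θ = xext ⬝ᵥ θstar) θaug ∧
      Lstd S θstar θstd < Lstd S θstar θaug :=
  mixture_eigenvector_augmentation_hurts_general Xstd S hS Pstd hPstd xext w hw1 hw2 hw3
end

section
/- For fixed X_std, X_ext, and Σ, there exists a scalar γ > 0 depending only on X_std, X_ext, Σ such that for every true parameter θ⋆ ∈ ℝ^d and every c > 0: if L_std(θ̂_aug) − L_std(θ̂_std) > c, then ‖θ⋆‖₂² − ‖θ̂_std‖₂² > γ c. That is, a large increase in standard error upon augmentation forces the true parameter to be sufficiently more complex (in ℓ2 norm) than the standard estimator. -/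
open Matrix BigOperators

/-!
Since `θ̂_aug` is the minimum-norm point of an affine subspace containing `θ⋆`, Pythagoras gives
`‖θ̂_aug‖² + ‖θ⋆ - θ̂_aug‖² = ‖θ⋆‖²`, and `‖θ̂_std‖² ≤ ‖θ̂_aug‖²` because `θ̂_aug` also interpolates
the standard data. Hence `‖θ⋆‖² - ‖θ̂_std‖² ≥ ‖θ⋆ - θ̂_aug‖²`. On the other hand the error gap is
at most `L_std(θ̂_aug) ≤ K ‖θ̂_aug - θ⋆‖²` with `K = ∑ᵢⱼ |Σᵢⱼ|`, so `γ = 1 / (K + 1)` works.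
-/

section DotProduct

variable {ι : Type*} [Fintype ι]

lemma dotProduct_add_smul_self (u v : ι → ℝ) (t : ℝ) :
    (u + t • v) ⬝ᵥ (u + t • v) = v ⬝ᵥ v * (t * t) + 2 * (u ⬝ᵥ v) * t + u ⬝ᵥ u := by
  simp only [add_dotProduct, dotProduct_add, smul_dotProduct, dotProduct_smul, smul_eq_mul,
    dotProduct_comm v u]
  ring

lemma dotProduct_eq_zero_of_forall_le_add_smul {u v : ι → ℝ}
    (hmin : ∀ t : ℝ, u ⬝ᵥ u ≤ (u + t • v) ⬝ᵥ (u + t • v)) : u ⬝ᵥ v = 0 := by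
  have hdiscr : discrim (v ⬝ᵥ v) (2 * (u ⬝ᵥ v)) 0 ≤ 0 :=
    discrim_le_zero fun t => by linarith [hmin t, dotProduct_add_smul_self u v t]
  rw [discrim] at hdiscr
  nlinarith [sq_nonneg (u ⬝ᵥ v)]

lemma mul_abs_le_dotProduct_self (v : ι → ℝ) (i j : ι) : |v i * v j| ≤ v ⬝ᵥ v := by
  have hsq : ∀ k, v k * v k ≤ v ⬝ᵥ v := fun k =>
    Finset.single_le_sum (f := fun k => v k * v k) (fun _ _ => mul_self_nonneg _)
      (Finset.mem_univ k)
  rw [abs_mul]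
  nlinarith [hsq i, hsq j, sq_abs (v i), sq_abs (v j), sq_nonneg (|v i| - |v j|)]

lemma dotProduct_mulVec_le_sum_abs_mul (S : Matrix ι ι ℝ) (v : ι → ℝ) :
    v ⬝ᵥ S *ᵥ v ≤ (∑ i, ∑ j, |S i j|) * (v ⬝ᵥ v) := by
  calc v ⬝ᵥ S *ᵥ v = ∑ i, ∑ j, S i j * (v i * v j) := by
        simp only [dotProduct, mulVec, Finset.mul_sum]
        exact Finset.sum_congr rfl fun _ _ => Finset.sum_congr rfl fun _ _ => by ring
    _ ≤ ∑ i, ∑ j, |S i j| * (v ⬝ᵥ v) := by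
        refine Finset.sum_le_sum fun i _ => Finset.sum_le_sum fun j _ => ?_
        calc S i j * (v i * v j) ≤ |S i j * (v i * v j)| := le_abs_self _
          _ = |S i j| * |v i * v j| := abs_mul _ _
          _ ≤ |S i j| * (v ⬝ᵥ v) := by gcongr; exact mul_abs_le_dotProduct_self v i j
    _ = (∑ i, ∑ j, |S i j|) * (v ⬝ᵥ v) := by simp only [Finset.sum_mul]

end DotProduct

lemma Lstd_nonneg {d : ℕ} {S : Matrix (Fin d) (Fin d) ℝ} (hS : S.PosSemidef)
    (θstar θ : Fin d → ℝ) :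
    0 ≤ Lstd S θstar θ := by
  simpa [Lstd] using hS.dotProduct_mulVec_nonneg (θ - θstar)

lemma IsMinNormInterp.dotProduct_self_add_sub_eq {d : ℕ} {C : (Fin d → ℝ) → Prop}
    {θ : Fin d → ℝ} (h : IsMinNormInterp C θ) {θs : Fin d → ℝ}
    (hline : ∀ t : ℝ, C (θ + t • (θs - θ))) :
    θ ⬝ᵥ θ + (θ - θs) ⬝ᵥ (θ - θs) = θs ⬝ᵥ θs := by
  have horth : θ ⬝ᵥ (θs - θ) = 0 :=
    dotProduct_eq_zero_of_forall_le_add_smul fun t => h.2 _ (hline t)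
  have := dotProduct_add_smul_self θ (θs - θ) 1
  rw [one_smul, add_sub_cancel, horth] at this
  rw [this, ← neg_sub θs θ, neg_dotProduct_neg]
  ring

lemma mulVec_add_smul_sub_eq {k d : ℕ} (X : Matrix (Fin k) (Fin d) ℝ) {θ θs : Fin d → ℝ}
    (h : X *ᵥ θ = X *ᵥ θs) (t : ℝ) : X *ᵥ (θ + t • (θs - θ)) = X *ᵥ θs := by
  rw [mulVec_add, mulVec_smul, mulVec_sub, h, sub_self, smul_zero, add_zero]

/-- Proposition 3 (paper): for fixed data matrices and covariance there is a constant
`γ > 0` such that whenever augmentation increases the standard error by more than `c`,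
the true parameter is more complex than the standard estimator by more than `γ c`
in squared Euclidean norm. -/
theorem complexity_lower_bound {n m d : ℕ}
    (Xstd : Matrix (Fin n) (Fin d) ℝ) (Xext : Matrix (Fin m) (Fin d) ℝ)
    (S : Matrix (Fin d) (Fin d) ℝ) (hS : S.PosSemidef) :
    ∃ γ : ℝ, 0 < γ ∧
      ∀ (θstar θstd θaug : Fin d → ℝ) (c : ℝ), 0 < c →
        IsMinNormInterp (fun θ => Xstd.mulVec θ = Xstd.mulVec θstar) θstd →
        IsMinNormInterp
          (fun θ => Xstd.mulVec θ = Xstd.mulVec θstar ∧ Xext.mulVec θ = Xext.mulVec θstar)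
          θaug →
        Lstd S θstar θaug - Lstd S θstar θstd > c →
        θstar ⬝ᵥ θstar - θstd ⬝ᵥ θstd > γ * c := by
  set K := ∑ i, ∑ j, |S i j|
  have hK : 0 ≤ K := by positivity
  refine ⟨1 / (K + 1), by positivity, ?_⟩
  intro θstar θstd θaug c _ hstd haug hgap
  set r := (θaug - θstar) ⬝ᵥ (θaug - θstar)
  have hLaug : Lstd S θstar θaug ≤ K * r := dotProduct_mulVec_le_sum_abs_mul S _
  have hpyth : θaug ⬝ᵥ θaug + r = θstar ⬝ᵥ θstar :=
    haug.dotProduct_self_add_sub_eq fun t =>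
      ⟨mulVec_add_smul_sub_eq Xstd haug.1.1 t, mulVec_add_smul_sub_eq Xext haug.1.2 t⟩
  have hstd_le : θstd ⬝ᵥ θstd ≤ θaug ⬝ᵥ θaug := hstd.2 θaug haug.1.1
  have hr : 0 ≤ r := by simpa only [star_trivial] using dotProduct_self_star_nonneg (θaug - θstar)
  have hc_lt : c < (K + 1) * r := by linarith [Lstd_nonneg hS θstar θstd]
  have hgain : r ≤ θstar ⬝ᵥ θstar - θstd ⬝ᵥ θstd := by linarith
  calc 1 / (K + 1) * c < 1 / (K + 1) * ((K + 1) * r) := by gcongr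
    _ = r := by field_simp
    _ ≤ θstar ⬝ᵥ θstar - θstd ⬝ᵥ θstd := hgain
end

section
/- Fix Σ, X_std, X_ext. There exist a true parameter θ⋆ ∈ ℝ^d and a constant c > 0 such that L_std(θ̂_aug) − L_std(θ̂_std) ≥ c if and only if there exist vectors v in the range of Π⊥_std Π_aug and w in the range of Π⊥_aug such that wᵀΣv ≠ 0. -/
/-
The minimum-norm interpolant of `θ⋆` under a constraint `θ - θ⋆ ∈ N` is `(1 - P) θ⋆`, where `P`
is the orthogonal projection onto `N`. Since `Null(X_std) ⊇ Null(X_std) ∩ Null(X_ext)`, the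
projections are nested, `Π_std Π_aug = Π_aug`, and the residuals are `Π_aug θ⋆` and
`Π_std θ⋆ = a + b` with `a = Π_aug θ⋆`, `b = Π_std Π⊥_aug θ⋆`. Hence the gap in standard error is
`aᵀΣa - (a + b)ᵀΣ(a + b) = -2 aᵀΣb - bᵀΣb`. As `bᵀΣb ≥ 0`, a positive gap forces `aᵀΣb ≠ 0`;
conversely, if `aᵀΣb ≠ 0` for some `a`, `b`, then `θ⋆ = t a + b` realises the gap
`-2t aᵀΣb - bᵀΣb`, which is `1` for a suitable `t`.
-/

open Matrix BigOperators

section Projection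

variable {ι : Type*} [Fintype ι]

lemma Matrix.mulVec_dotProduct_of_transpose_eq {A : Matrix ι ι ℝ} (hA : Aᵀ = A) (x y : ι → ℝ) :
    (A *ᵥ x) ⬝ᵥ y = x ⬝ᵥ A *ᵥ y := by
  rw [dotProduct_mulVec, ← mulVec_transpose, hA]

lemma Matrix.add_dotProduct_mulVec_add_of_transpose_eq {S : Matrix ι ι ℝ} (hS : Sᵀ = S)
    (a b : ι → ℝ) :
    (a + b) ⬝ᵥ S *ᵥ (a + b) = a ⬝ᵥ S *ᵥ a + 2 * (a ⬝ᵥ S *ᵥ b) + b ⬝ᵥ S *ᵥ b := by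
  have hba : b ⬝ᵥ S *ᵥ a = a ⬝ᵥ S *ᵥ b := by
    rw [← Matrix.mulVec_dotProduct_of_transpose_eq hS, dotProduct_comm]
  rw [mulVec_add, dotProduct_add, add_dotProduct, add_dotProduct, hba]
  ring

structure IsOrthProjOnto (P : Matrix ι ι ℝ) (N : (ι → ℝ) → Prop) : Prop where
  transpose_eq : Pᵀ = P
  mulVec_mem : ∀ v, N (P *ᵥ v)
  mulVec_eq_self : ∀ v, N v → P *ᵥ v = v

namespace IsOrthProjOnto

variable {P Q : Matrix ι ι ℝ} {N M : (ι → ℝ) → Prop}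

lemma mulVec_mulVec_self (hP : IsOrthProjOnto P N) (v : ι → ℝ) : P *ᵥ (P *ᵥ v) = P *ᵥ v :=
  hP.mulVec_eq_self _ (hP.mulVec_mem v)

variable [DecidableEq ι]

lemma mulVec_one_sub_mulVec (hP : IsOrthProjOnto P N) (v : ι → ℝ) : P *ᵥ ((1 - P) *ᵥ v) = 0 := by
  rw [sub_mulVec, one_mulVec, mulVec_sub, hP.mulVec_mulVec_self, sub_self]

lemma one_sub_mulVec_dotProduct_mulVec (hP : IsOrthProjOnto P N) (x y : ι → ℝ) :
    ((1 - P) *ᵥ x) ⬝ᵥ (P *ᵥ y) = 0 := by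
  rw [dotProduct_comm, Matrix.mulVec_dotProduct_of_transpose_eq hP.transpose_eq,
    hP.mulVec_one_sub_mulVec, dotProduct_zero]

lemma mul_eq_right_of_le (hP : IsOrthProjOnto P N) (hQ : IsOrthProjOnto Q M)
    (hMN : ∀ v, M v → N v) :
    P * Q = Q := by
  refine ext_of_mulVec_single fun i => ?_
  rw [← mulVec_mulVec]
  exact hP.mulVec_eq_self _ (hMN _ (hQ.mulVec_mem _))

lemma mul_eq_left_of_le (hP : IsOrthProjOnto P N) (hQ : IsOrthProjOnto Q M)
    (hMN : ∀ v, M v → N v) :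
    Q * P = Q := by
  simpa only [transpose_mul, hP.transpose_eq, hQ.transpose_eq] using
    congrArg transpose (hP.mul_eq_right_of_le hQ hMN)

lemma mulVec_mulVec_one_sub_mulVec_of_le (hP : IsOrthProjOnto P N) (hQ : IsOrthProjOnto Q M)
    (hMN : ∀ v, M v → N v) (v : ι → ℝ) : Q *ᵥ (P *ᵥ ((1 - Q) *ᵥ v)) = 0 := by
  rw [mulVec_mulVec, hP.mul_eq_left_of_le hQ hMN, hQ.mulVec_one_sub_mulVec]

lemma mulVec_smul_add_of_le (hP : IsOrthProjOnto P N) (hQ : IsOrthProjOnto Q M)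
    (hMN : ∀ v, M v → N v) (t : ℝ) (u v : ι → ℝ) :
    Q *ᵥ (t • Q *ᵥ u + P *ᵥ ((1 - Q) *ᵥ v)) = t • Q *ᵥ u := by
  rw [mulVec_add, mulVec_smul, hQ.mulVec_mulVec_self,
    hP.mulVec_mulVec_one_sub_mulVec_of_le hQ hMN, add_zero]

lemma mulVec_one_sub_mulVec_smul_add_of_le (hP : IsOrthProjOnto P N) (hQ : IsOrthProjOnto Q M)
    (hMN : ∀ v, M v → N v) (t : ℝ) (u v : ι → ℝ) :
    P *ᵥ ((1 - Q) *ᵥ (t • Q *ᵥ u + P *ᵥ ((1 - Q) *ᵥ v))) = P *ᵥ ((1 - Q) *ᵥ v) := by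
  rw [sub_mulVec, one_mulVec, hP.mulVec_smul_add_of_le hQ hMN, add_sub_cancel_left,
    hP.mulVec_mulVec_self]

end IsOrthProjOnto

end Projection

section MinNorm

variable {d : ℕ} {P : Matrix (Fin d) (Fin d) ℝ} {N : (Fin d → ℝ) → Prop}

namespace IsOrthProjOnto

lemma sub_one_sub_mulVec (hP : IsOrthProjOnto P N) {θs θ : Fin d → ℝ} (h : N (θ - θs)) :
    θ - (1 - P) *ᵥ θs = P *ᵥ θ := by
  have hfix : P *ᵥ θ - P *ᵥ θs = θ - θs := by rw [← mulVec_sub, hP.mulVec_eq_self _ h]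
  calc θ - (1 - P) *ᵥ θs = (θ - θs) + P *ᵥ θs := by rw [sub_mulVec, one_mulVec]; abel
    _ = P *ᵥ θ := by rw [← hfix]; abel

lemma dotProduct_self_eq (hP : IsOrthProjOnto P N) {θs θ : Fin d → ℝ} (h : N (θ - θs)) :
    θ ⬝ᵥ θ = ((1 - P) *ᵥ θs) ⬝ᵥ ((1 - P) *ᵥ θs) + (P *ᵥ θ) ⬝ᵥ (P *ᵥ θ) := by
  have hθ : θ = (1 - P) *ᵥ θs + P *ᵥ θ := by rw [← hP.sub_one_sub_mulVec h]; abel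
  have horth := hP.one_sub_mulVec_dotProduct_mulVec θs θ
  conv_lhs => rw [hθ]
  rw [add_dotProduct, dotProduct_add, dotProduct_add, horth, dotProduct_comm (P *ᵥ θ), horth]
  ring

theorem isMinNormInterp_iff (hP : IsOrthProjOnto P N) (θs θ : Fin d → ℝ) :
    IsMinNormInterp (fun θ => N (θ - θs)) θ ↔ θ = (1 - P) *ᵥ θs := by
  have hnonneg (v : Fin d → ℝ) : 0 ≤ v ⬝ᵥ v := by simpa using dotProduct_star_self_nonneg v
  have hfeasible : N ((1 - P) *ᵥ θs - θs) := by
    simpa [sub_mulVec, mulVec_neg] using hP.mulVec_mem (-θs)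
  constructor
  · rintro ⟨hθ, hmin⟩
    have hle := hmin _ hfeasible
    rw [hP.dotProduct_self_eq hθ] at hle
    have hPθ : P *ᵥ θ = 0 :=
      dotProduct_self_eq_zero.mp (le_antisymm (by linarith) (hnonneg _))
    rw [← sub_eq_zero, hP.sub_one_sub_mulVec hθ, hPθ]
  · rintro rfl
    refine ⟨hfeasible, fun θ' hθ' => ?_⟩
    rw [hP.dotProduct_self_eq hθ']
    linarith [hnonneg (P *ᵥ θ')]

end IsOrthProjOnto

end MinNorm

section StandardError

variable {d : ℕ}

lemma Lstd_one_sub_mulVec (S P : Matrix (Fin d) (Fin d) ℝ) (θs : Fin d → ℝ) :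
    Lstd S θs ((1 - P) *ᵥ θs) = (P *ᵥ θs) ⬝ᵥ S *ᵥ (P *ᵥ θs) := by
  rw [Lstd, sub_mulVec, one_mulVec, sub_sub_cancel_left, mulVec_neg, neg_dotProduct_neg]

lemma Lstd_sub_Lstd_of_mul_eq {S P Q : Matrix (Fin d) (Fin d) ℝ} (hS : Sᵀ = S) (hPQ : P * Q = Q)
    (θs : Fin d → ℝ) :
    Lstd S θs ((1 - Q) *ᵥ θs) - Lstd S θs ((1 - P) *ᵥ θs) =
      -2 * ((Q *ᵥ θs) ⬝ᵥ S *ᵥ (P *ᵥ ((1 - Q) *ᵥ θs)))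
        - (P *ᵥ ((1 - Q) *ᵥ θs)) ⬝ᵥ S *ᵥ (P *ᵥ ((1 - Q) *ᵥ θs)) := by
  have hsplit : P *ᵥ θs = Q *ᵥ θs + P *ᵥ ((1 - Q) *ᵥ θs) := by
    rw [mulVec_mulVec, ← add_mulVec, mul_sub, mul_one, hPQ, add_sub_cancel]
  rw [Lstd_one_sub_mulVec, Lstd_one_sub_mulVec, hsplit,
    Matrix.add_dotProduct_mulVec_add_of_transpose_eq hS]
  ring

end StandardError

lemma IsOrthProjNull.isOrthProjOnto {n d : ℕ} {X : Matrix (Fin n) (Fin d) ℝ}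
    {P : Matrix (Fin d) (Fin d) ℝ} (h : IsOrthProjNull X P) :
    IsOrthProjOnto P (fun v => X *ᵥ v = 0) :=
  ⟨h.1, h.2.2.1, h.2.2.2⟩

lemma IsOrthProjNull2.isOrthProjOnto {n m d : ℕ} {X₁ : Matrix (Fin n) (Fin d) ℝ}
    {X₂ : Matrix (Fin m) (Fin d) ℝ} {P : Matrix (Fin d) (Fin d) ℝ} (h : IsOrthProjNull2 X₁ X₂ P) :
    IsOrthProjOnto P (fun v => X₁ *ᵥ v = 0 ∧ X₂ *ᵥ v = 0) :=
  ⟨h.1, h.2.2.1, fun v hv => h.2.2.2 v hv.1 hv.2⟩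

lemma IsOrthProjNull.isMinNormInterp_iff {n d : ℕ} {X : Matrix (Fin n) (Fin d) ℝ}
    {P : Matrix (Fin d) (Fin d) ℝ} (h : IsOrthProjNull X P) (θs θ : Fin d → ℝ) :
    IsMinNormInterp (fun θ => X *ᵥ θ = X *ᵥ θs) θ ↔ θ = (1 - P) *ᵥ θs := by
  simpa only [mulVec_sub, sub_eq_zero] using h.isOrthProjOnto.isMinNormInterp_iff θs θ

lemma IsOrthProjNull2.isMinNormInterp_iff {n m d : ℕ} {X₁ : Matrix (Fin n) (Fin d) ℝ}
    {X₂ : Matrix (Fin m) (Fin d) ℝ} {P : Matrix (Fin d) (Fin d) ℝ} (h : IsOrthProjNull2 X₁ X₂ P)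
    (θs θ : Fin d → ℝ) :
    IsMinNormInterp (fun θ => X₁ *ᵥ θ = X₁ *ᵥ θs ∧ X₂ *ᵥ θ = X₂ *ᵥ θs) θ ↔
      θ = (1 - P) *ᵥ θs := by
  simpa only [mulVec_sub, sub_eq_zero] using h.isOrthProjOnto.isMinNormInterp_iff θs θ

/-- Lemma constructexist, iff part (paper): for fixed `Σ, X_std, X_ext`, there exist a
true parameter and `c > 0` with `L_std(θ̂_aug) − L_std(θ̂_std) ≥ c` if and only if there
are directions `v` in the range of `Π⊥_std Π_aug` and `w` in the range of `Π⊥_aug` with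
`wᵀ Σ v ≠ 0`. -/
theorem augmentation_hurts_iff_cross_term {n m d : ℕ}
    (Xstd : Matrix (Fin n) (Fin d) ℝ) (Xext : Matrix (Fin m) (Fin d) ℝ)
    (S : Matrix (Fin d) (Fin d) ℝ) (hS : S.PosSemidef)
    (Pstd Paug : Matrix (Fin d) (Fin d) ℝ)
    (hPstd : IsOrthProjNull Xstd Pstd)
    (hPaug : IsOrthProjNull2 Xstd Xext Paug) :
    (∃ (θstar θstd θaug : Fin d → ℝ) (c : ℝ), 0 < c ∧
        IsMinNormInterp (fun θ => Xstd.mulVec θ = Xstd.mulVec θstar) θstd ∧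
        IsMinNormInterp
          (fun θ => Xstd.mulVec θ = Xstd.mulVec θstar ∧ Xext.mulVec θ = Xext.mulVec θstar)
          θaug ∧
        Lstd S θstar θaug - Lstd S θstar θstd ≥ c) ↔
      (∃ u1 u2 : Fin d → ℝ,
        (Paug.mulVec u1) ⬝ᵥ S.mulVec (Pstd.mulVec ((1 - Paug).mulVec u2)) ≠ 0) := by
  have hSsymm : Sᵀ = S := by simpa using hS.isHermitian.eq
  have hnested : ∀ v, Xstd *ᵥ v = 0 ∧ Xext *ᵥ v = 0 → Xstd *ᵥ v = 0 := fun _ hv => hv.1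
  have hgap := Lstd_sub_Lstd_of_mul_eq hSsymm
    (hPstd.isOrthProjOnto.mul_eq_right_of_le hPaug.isOrthProjOnto hnested)
  constructor
  · rintro ⟨θs, θstd, θaug, c, hc, hstd, haug, hgt⟩
    rw [hPstd.isMinNormInterp_iff] at hstd
    rw [hPaug.isMinNormInterp_iff] at haug
    subst hstd haug
    refine ⟨θs, θs, fun hzero => ?_⟩
    rw [hgap, hzero] at hgt
    have hquad := hS.dotProduct_mulVec_nonneg (Pstd *ᵥ ((1 - Paug) *ᵥ θs))
    simp only [star_trivial] at hquad
    linarith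
  · rintro ⟨u1, u2, hcross⟩
    set s := (Paug *ᵥ u1) ⬝ᵥ S *ᵥ (Pstd *ᵥ ((1 - Paug) *ᵥ u2))
    set q := (Pstd *ᵥ ((1 - Paug) *ᵥ u2)) ⬝ᵥ S *ᵥ (Pstd *ᵥ ((1 - Paug) *ᵥ u2))
    set θs := (-(q + 1) / (2 * s)) • Paug *ᵥ u1 + Pstd *ᵥ ((1 - Paug) *ᵥ u2)
    refine ⟨θs, _, _, 1, one_pos, (hPstd.isMinNormInterp_iff _ _).2 rfl,
      (hPaug.isMinNormInterp_iff _ _).2 rfl, ?_⟩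
    rw [hgap, hPstd.isOrthProjOnto.mulVec_smul_add_of_le hPaug.isOrthProjOnto hnested,
      hPstd.isOrthProjOnto.mulVec_one_sub_mulVec_smul_add_of_le hPaug.isOrthProjOnto hnested,
      smul_dotProduct, smul_eq_mul]
    change -2 * (-(q + 1) / (2 * s) * s) - q ≥ 1
    field_simp
    linarith
end

section
/- Robust self-training never increases standard error in noiseless linear regression: let Σ ∈ ℝ^{d×d} be symmetric positive semidefinite, θ⋆ ∈ ℝ^d, X_std ∈ ℝ^{n×d} with y_std = X_std θ⋆, and X_ext ∈ ℝ^{m×d} with X_ext θ⋆ = 0. Let θ_int be ANY interpolant of the standard data (X_std θ_int = y_std), and let θ̂_rst be any minimizer of (θ − θ_int)ᵀ Σ (θ − θ_int) over the set {θ : X_std θ = y_std and X_ext θ = 0}. Then (θ̂_rst − θ⋆)ᵀ Σ (θ̂_rst − θ⋆) ≤ (θ_int − θ⋆)ᵀ Σ (θ_int − θ⋆), i.e. L_std(θ̂_rst) ≤ L_std(θ_int). -/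
open Matrix BigOperators

namespace LinearMap.BilinForm.IsSymm

section CommRing

variable {R V : Type*} [CommRing R] [AddCommGroup V] [Module R V]
  {B : LinearMap.BilinForm R V}

lemma apply_add_smul_self (hB : B.IsSymm) (a b : V) (t : R) :
    B (a + t • b) (a + t • b) = B a a + 2 * t * B a b + t ^ 2 * B b b := by
  simp only [add_left, add_right, smul_left, smul_right, hB.eq b a]
  ring

lemma apply_add_self_of_apply_eq_zero (hB : B.IsSymm) {a b : V} (hab : B a b = 0) :
    B (a + b) (a + b) = B a a + B b b := by
  simpa [hab] using hB.apply_add_smul_self a b 1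

end CommRing

section OrderedField

variable {K V : Type*} [Field K] [LinearOrder K] [IsStrictOrderedRing K] [AddCommGroup V]
  [Module K V] {B : LinearMap.BilinForm K V}

lemma apply_eq_zero_of_forall_apply_self_le (hB : B.IsSymm) {a b : V}
    (hmin : ∀ t : K, B a a ≤ B (a + t • b) (a + t • b)) : B a b = 0 := by
  have hdisc : discrim (B b b) (2 * B a b) 0 ≤ 0 := discrim_le_zero fun t => by
    have := hmin t
    rw [hB.apply_add_smul_self] at this
    linarith
  have hsq : (2 * B a b) ^ 2 ≤ 0 := by simpa [discrim] using hdisc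
  nlinarith [sq_nonneg (B a b)]

lemma apply_sub_self_le_of_forall_le_on_line (hB : B.IsSymm) (hpos : ∀ v, 0 ≤ B v v)
    {p x y : V}
    (hmin : ∀ t : K, B (x - p) (x - p) ≤ B (x + t • (y - x) - p) (x + t • (y - x) - p)) :
    B (x - y) (x - y) ≤ B (p - y) (p - y) := by
  have horth : B (x - p) (y - x) = 0 := hB.apply_eq_zero_of_forall_apply_self_le fun t => by
    simpa only [add_sub_right_comm] using hmin t
  have hpyth := hB.apply_add_self_of_apply_eq_zero horth
  have hneg : ∀ v, B (-v) (-v) = B v v := fun v => by simp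
  rw [show x - p + (y - x) = -(p - y) by abel, hneg, show y - x = -(x - y) by abel, hneg] at hpyth
  linarith [hpos (x - p)]

end OrderedField

end LinearMap.BilinForm.IsSymm

lemma Matrix.mulVec_add_smul_sub_eq {R m n : Type*} [CommRing R] [Fintype n] {X : Matrix m n R}
    {x y : n → R} (h : X *ᵥ x = X *ᵥ y) (t : R) : X *ᵥ (x + t • (y - x)) = X *ᵥ y := by
  rw [mulVec_add, mulVec_smul, mulVec_sub, h, sub_self, smul_zero, add_zero]

theorem rst_no_standard_error_increase_general {n m d : ℕ}
    (Xstd : Matrix (Fin n) (Fin d) ℝ) (Xext : Matrix (Fin m) (Fin d) ℝ)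
    (S : Matrix (Fin d) (Fin d) ℝ) (hS : S.PosSemidef)
    (θstar : Fin d → ℝ) (hext : Xext.mulVec θstar = 0)
    (θint : Fin d → ℝ)
    (θrst : Fin d → ℝ)
    (hrst1 : Xstd.mulVec θrst = Xstd.mulVec θstar)
    (hrst2 : Xext.mulVec θrst = 0)
    (hmin : ∀ θ : Fin d → ℝ, Xstd.mulVec θ = Xstd.mulVec θstar → Xext.mulVec θ = 0 →
      (θrst - θint) ⬝ᵥ S.mulVec (θrst - θint) ≤ (θ - θint) ⬝ᵥ S.mulVec (θ - θint)) :
    Lstd S θstar θrst ≤ Lstd S θstar θint := by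
  have hB : S.toBilin'.IsSymm :=
    isSymm_toBilin'_iff_isSymm.mpr (isHermitian_iff_isSymm.mp hS.isHermitian)
  have hpos : ∀ v, 0 ≤ S.toBilin' v v := fun v => by
    simpa [toBilin'_apply'] using hS.dotProduct_mulVec_nonneg v
  simp only [Lstd, ← toBilin'_apply'] at hmin ⊢
  refine hB.apply_sub_self_le_of_forall_le_on_line hpos fun t => hmin _ ?_ ?_
  · exact mulVec_add_smul_sub_eq hrst1 t
  · rw [mulVec_add_smul_sub_eq (hrst2.trans hext.symm) t, hext]

/-- Theorem linear-x, standard-error part (paper): the robust self-training estimator,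
which minimizes the `Σ`-weighted distance to any standard interpolant subject to
interpolating the standard data and being invariant to the perturbation directions,
never has larger standard error than that interpolant. -/
theorem rst_no_standard_error_increase {n m d : ℕ}
    (Xstd : Matrix (Fin n) (Fin d) ℝ) (Xext : Matrix (Fin m) (Fin d) ℝ)
    (S : Matrix (Fin d) (Fin d) ℝ) (hS : S.PosSemidef)
    (θstar : Fin d → ℝ) (hext : Xext.mulVec θstar = 0)
    (θint : Fin d → ℝ) (hint : Xstd.mulVec θint = Xstd.mulVec θstar)
    (θrst : Fin d → ℝ)
    (hrst1 : Xstd.mulVec θrst = Xstd.mulVec θstar)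
    (hrst2 : Xext.mulVec θrst = 0)
    (hmin : ∀ θ : Fin d → ℝ, Xstd.mulVec θ = Xstd.mulVec θstar → Xext.mulVec θ = 0 →
      (θrst - θint) ⬝ᵥ S.mulVec (θrst - θint) ≤ (θ - θint) ⬝ᵥ S.mulVec (θ - θint)) :
    Lstd S θstar θrst ≤ Lstd S θstar θint :=
  rst_no_standard_error_increase_general Xstd Xext S hS θstar hext θint θrst hrst1 hrst2 hmin
end

section
/- The RST estimator achieves robust error equal to its standard error: let θ⋆ ∈ ℝ^d, X_ext ∈ ℝ^{m×d}, and suppose θ ∈ ℝ^d satisfies X_ext θ = 0. Let T be a perturbation map assigning to each x ∈ ℝ^d a set T(x) ⊆ ℝ^d with x ∈ T(x), such that for every x_adv ∈ T(x) the difference x_adv − x lies in the row span of X_ext (and consequently (x_adv − x)ᵀθ⋆ = 0 when X_ext θ⋆ = 0). Then for every such x, sup_{x_adv ∈ T(x)} (x_advᵀθ − xᵀθ⋆)² = (xᵀθ − xᵀθ⋆)²; i.e. the worst-case (robust) squared loss at x equals the standard squared loss at x, so the robust error of θ equals its standard error under any input distribution supported on such x. -/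
open Matrix BigOperators

/-- Theorem linear-x, robust-error part (paper): if `θ` is invariant to all perturbation
directions (`X_ext θ = 0`) and every perturbation `x_adv ∈ T(x)` differs from `x` by an
element of the row span of `X_ext`, then the worst-case squared loss at `x` equals the
standard squared loss at `x`. -/
theorem rst_robust_error_equals_standard_error {m d : ℕ}
    (Xext : Matrix (Fin m) (Fin d) ℝ)
    (θstar θ : Fin d → ℝ)
    (hstar : Xext.mulVec θstar = 0)
    (hθ : Xext.mulVec θ = 0)
    (T : (Fin d → ℝ) → Set (Fin d → ℝ))
    (hself : ∀ x, x ∈ T x)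
    (hspan : ∀ x, ∀ xadv ∈ T x, ∃ c : Fin m → ℝ, xadv - x = Matrix.vecMul c Xext) :
    ∀ x : Fin d → ℝ,
      sSup ((fun xadv => (xadv ⬝ᵥ θ - x ⬝ᵥ θstar) ^ 2) '' T x) =
        (x ⬝ᵥ θ - x ⬝ᵥ θstar) ^ 2 := by
  intro x
  have himg : (fun xadv => (xadv ⬝ᵥ θ - x ⬝ᵥ θstar) ^ 2) '' T x
      = {(x ⬝ᵥ θ - x ⬝ᵥ θstar) ^ 2} := by
    apply Set.eq_singleton_iff_nonempty_unique_mem.mpr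
    constructor
    · exact ⟨_, ⟨x, hself x, rfl⟩⟩
    · rintro y ⟨xadv, hx, rfl⟩
      obtain ⟨c, hc⟩ := hspan x xadv hx
      have : xadv ⬝ᵥ θ = x ⬝ᵥ θ := by
        have h1 : (xadv - x) ⬝ᵥ θ = 0 := by
          rw [hc, ← Matrix.dotProduct_mulVec, hθ, dotProduct_zero]
        rw [sub_dotProduct] at h1
        linarith
      simp only [this]
  rw [himg, csSup_singleton]
end

section
/- Let 0 < δ < 1 and set x₁ = (1+δ, 1, 0) and x₂ = (0, 1, 1+δ) in ℝ³. Then: (i) the unique minimum ℓ1-norm solution of the single constraint x₁ᵀθ = 2+δ is θ̂_std = ((2+δ)/(1+δ), 0, 0); and (ii) the unique minimum ℓ1-norm solution of the system {x₁ᵀθ = 2+δ, x₂ᵀθ = 2+δ} is θ̂_aug = (0, 2+δ, 0). In particular ‖θ̂_aug‖₁ = 2+δ > (2+δ)/(1+δ) = ‖θ̂_std‖₁, and θ̂_aug predicts 0 on x₃ = (1+δ, 0, 1) while θ̂_std predicts 2+δ on x₃. -/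
open Matrix BigOperators

/-- Appendix (minimum ℓ1-norm example), 3-dimensional construction: explicit unique
minimum ℓ1-norm standard and augmented estimators, their ℓ1 norms, and their
predictions on `x₃`. -/
theorem l1_three_dim_construction (δ : ℝ) (h0 : 0 < δ) (h1 : δ < 1) :
    let x1 : Fin 3 → ℝ := ![1 + δ, 1, 0]
    let x2 : Fin 3 → ℝ := ![0, 1, 1 + δ]
    let x3 : Fin 3 → ℝ := ![1 + δ, 0, 1]
    let θstd : Fin 3 → ℝ := ![(2 + δ) / (1 + δ), 0, 0]
    let θaug : Fin 3 → ℝ := ![0, 2 + δ, 0]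
    let l1 : (Fin 3 → ℝ) → ℝ := fun θ => ∑ i, |θ i|
    (x1 ⬝ᵥ θstd = 2 + δ ∧
        ∀ θ : Fin 3 → ℝ, x1 ⬝ᵥ θ = 2 + δ → θ ≠ θstd → l1 θstd < l1 θ) ∧
      (x1 ⬝ᵥ θaug = 2 + δ ∧ x2 ⬝ᵥ θaug = 2 + δ ∧
        ∀ θ : Fin 3 → ℝ, x1 ⬝ᵥ θ = 2 + δ → x2 ⬝ᵥ θ = 2 + δ → θ ≠ θaug → l1 θaug < l1 θ) ∧
      l1 θaug = 2 + δ ∧ l1 θstd = (2 + δ) / (1 + δ) ∧ (2 + δ) / (1 + δ) < 2 + δ ∧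
      x3 ⬝ᵥ θaug = 0 ∧ x3 ⬝ᵥ θstd = 2 + δ := by
  intro x1 x2 x3 θstd θaug l1
  have hδ1 : (0:ℝ) < 1 + δ := by linarith
  have hv : (0:ℝ) < (2 + δ) / (1 + δ) := by positivity
  have hsimpstd : l1 θstd = (2 + δ) / (1 + δ) := by
    simp [l1, θstd, Fin.sum_univ_three, abs_of_pos hv]
  have hsimpaug : l1 θaug = 2 + δ := by
    simp [l1, θaug, Fin.sum_univ_three, abs_of_pos (by linarith : (0:ℝ) < 2 + δ)]
  refine ⟨⟨?_, ?_⟩, ⟨?_, ?_, ?_⟩, hsimpaug, hsimpstd, ?_, ?_, ?_⟩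
  · simp [x1, θstd, dotProduct, Fin.sum_univ_three]
    field_simp
  · intro θ hθ hne
    simp only [x1, dotProduct, Fin.sum_univ_three, Matrix.cons_val_zero,
      Matrix.cons_val_one, Matrix.head_cons, Matrix.cons_val_two, Matrix.tail_cons] at hθ
    rw [hsimpstd]
    simp only [l1, Fin.sum_univ_three]
    set a := θ 0 with ha; set b := θ 1 with hb'; set c := θ 2 with hc'
    rw [div_lt_iff₀ hδ1]
    by_cases hb : b = 0
    · by_cases hc : c = 0
      · exfalso
        apply hne
        have haeq : a = (2 + δ) / (1 + δ) := by
          rw [eq_div_iff (by linarith : (1:ℝ) + δ ≠ 0)]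
          linarith [hθ]
        funext i
        fin_cases i <;> simp [θstd, ← ha, ← hb', ← hc', haeq, hb, hc]
      · nlinarith [le_abs_self a, le_abs_self b, abs_nonneg a, abs_nonneg b,
          abs_pos.mpr hc]
    · nlinarith [le_abs_self a, le_abs_self b, abs_nonneg a, abs_nonneg c,
        abs_pos.mpr hb]
  · simp [x1, θaug, dotProduct, Fin.sum_univ_three]
  · simp [x2, θaug, dotProduct, Fin.sum_univ_three]
  · intro θ hθ1 hθ2 hne
    simp only [x1, x2, dotProduct, Fin.sum_univ_three, Matrix.cons_val_zero,
      Matrix.cons_val_one, Matrix.head_cons, Matrix.cons_val_two, Matrix.tail_cons] at hθ1 hθ2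
    rw [hsimpaug]
    simp only [l1, Fin.sum_univ_three]
    set a := θ 0 with ha; set b := θ 1 with hb'; set c := θ 2 with hc'
    have hca : c = a := by
      have : (1 + δ) * c = (1 + δ) * a := by linarith
      exact mul_left_cancel₀ (by linarith) this
    by_cases haz : a = 0
    · exfalso
      apply hne
      have hbz : b = 2 + δ := by
        rw [haz] at hθ1; linarith
      funext i
      fin_cases i <;> simp [θaug, ← ha, ← hb', ← hc', haz, hbz, hca]
    · have habs : |c| = |a| := by rw [hca]
      nlinarith [habs, le_abs_self b, le_abs_self a, abs_pos.mpr haz,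
        mul_le_mul_of_nonneg_left (le_abs_self a) (le_of_lt hδ1)]
  · rw [div_lt_iff₀ hδ1]; nlinarith
  · simp [x3, θaug, dotProduct, Fin.sum_univ_three]
  · simp [x3, θstd, dotProduct, Fin.sum_univ_three]
    field_simp
end

section
/- Data augmentation hurts minimum ℓ1-norm interpolation by a factor (p−ε)/ε: let d ≥ 1 be an integer, 0 < δ < 1, and 0 < ε < p < 1. Set x₁ = (1+δ,1,0), x₂ = (0,1,1+δ), x₃ = (1+δ,0,1) in ℝ³, and let x̃ᵢ ∈ ℝ^{3d} be the d-fold concatenation of xᵢ. Let θ⋆ = (1,...,1) ∈ ℝ^{3d}, let θ̂_std ∈ ℝ^{3d} be the d-fold concatenation of ((2+δ)/(1+δ), 0, 0), and let θ̂_aug ∈ ℝ^{3d} be the d-fold concatenation of (0, 2+δ, 0). Then θ̂_std is a minimum ℓ1-norm solution of x̃₁ᵀθ = x̃₁ᵀθ⋆, θ̂_aug is a minimum ℓ1-norm solution of {x̃₁ᵀθ = x̃₁ᵀθ⋆, x̃₂ᵀθ = x̃₂ᵀθ⋆}, and for the random input X̃ equal to x̃₁ with probability 1−p, x̃₂ with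 probability ε, and x̃₃ with probability p−ε: E[(X̃ᵀθ̂_std − X̃ᵀθ⋆)²] = ε d² (2+δ)² and E[(X̃ᵀθ̂_aug − X̃ᵀθ⋆)²] = (p−ε) d² (2+δ)², so the ratio of the augmented to the standard error is (p−ε)/ε (which equals d−1 when p = 1/d² and ε = 1/d³). -/
/-!
If every coordinate of `x` has absolute value at most `M`, then `x ⬝ᵥ θ ≤ M ‖θ‖₁`; hence an
interpolant `θ₀` with `M ‖θ₀‖₁ = x ⬝ᵥ θ₀` has minimal ℓ1 norm among all `θ` with
`x ⬝ᵥ θ = x ⬝ᵥ θ₀`. For `θ̂_std` the certificate is `x₁` with `M = 1 + δ`; for `θ̂_aug` it is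
`x₁ + x₂ = (1 + δ, 2, 1 + δ)` with `M = 2`, which needs `δ ≤ 1`. Concatenating `d` copies
multiplies every inner product and every ℓ1 norm by `d`, so the certificates survive, and every
residual is `d` times the three-dimensional one: `θ̂_std` errs only on `x̃₂` and `θ̂_aug` only on
`x̃₃`, both by `d (2 + δ)`.
-/

open Matrix BigOperators

section Concatenation
variable {ι : Type*}

/-- The paper's `ṽ ∈ ℝ^{d·|ι|}`, with coordinates indexed by (copy, coordinate). -/
def concatCopies (d : ℕ) (v : ι → ℝ) : Fin d × ι → ℝ := fun q => v q.2

theorem concatCopies_add (d : ℕ) (u v : ι → ℝ) :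
    concatCopies d (u + v) = concatCopies d u + concatCopies d v := rfl

variable [Fintype ι]

theorem concatCopies_dotProduct (d : ℕ) (u v : ι → ℝ) :
    concatCopies d u ⬝ᵥ concatCopies d v = d * (u ⬝ᵥ v) := by
  simp [concatCopies, dotProduct, Fintype.sum_prod_type]

theorem concatCopies_dotProduct_sub (d : ℕ) (x u v : ι → ℝ) :
    concatCopies d x ⬝ᵥ concatCopies d u - concatCopies d x ⬝ᵥ concatCopies d v =
      d * (x ⬝ᵥ u - x ⬝ᵥ v) := by
  rw [concatCopies_dotProduct, concatCopies_dotProduct, mul_sub]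

theorem concatCopies_dotProduct_eq {x u v : ι → ℝ} (d : ℕ) (h : x ⬝ᵥ u = x ⬝ᵥ v) :
    concatCopies d x ⬝ᵥ concatCopies d u = concatCopies d x ⬝ᵥ concatCopies d v := by
  rw [concatCopies_dotProduct, concatCopies_dotProduct, h]

theorem sum_abs_concatCopies (d : ℕ) (v : ι → ℝ) :
    ∑ q, |concatCopies d v q| = d * ∑ i, |v i| := by
  simp [concatCopies, Fintype.sum_prod_type]

end Concatenation

section L1Duality
variable {ι : Type*} [Fintype ι]

theorem dotProduct_le_mul_sum_abs {x : ι → ℝ} {M : ℝ} (hx : ∀ i, |x i| ≤ M) (θ : ι → ℝ) :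
    x ⬝ᵥ θ ≤ M * ∑ i, |θ i| := by
  rw [Finset.mul_sum]
  refine Finset.sum_le_sum fun i _ => ?_
  calc x i * θ i ≤ |x i| * |θ i| := abs_mul (x i) (θ i) ▸ le_abs_self _
    _ ≤ M * |θ i| := mul_le_mul_of_nonneg_right (hx i) (abs_nonneg _)

theorem sum_abs_le_of_dotProduct_eq {x θ₀ θ : ι → ℝ} {M : ℝ} (hM : 0 < M)
    (hx : ∀ i, |x i| ≤ M) (h₀ : M * ∑ i, |θ₀ i| = x ⬝ᵥ θ₀) (h : x ⬝ᵥ θ = x ⬝ᵥ θ₀) :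
    ∑ i, |θ₀ i| ≤ ∑ i, |θ i| :=
  le_of_mul_le_mul_left (h₀ ▸ h ▸ dotProduct_le_mul_sum_abs hx θ) hM

theorem sum_abs_concatCopies_le_of_dotProduct_eq {d : ℕ} {x θ₀ : ι → ℝ} {M : ℝ} (hM : 0 < M)
    (hx : ∀ i, |x i| ≤ M) (h₀ : M * ∑ i, |θ₀ i| = x ⬝ᵥ θ₀) {θ : Fin d × ι → ℝ}
    (h : concatCopies d x ⬝ᵥ θ = concatCopies d x ⬝ᵥ concatCopies d θ₀) :
    ∑ q, |concatCopies d θ₀ q| ≤ ∑ q, |θ q| := by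
  refine sum_abs_le_of_dotProduct_eq (x := concatCopies d x) hM (fun q => hx q.2) ?_ h
  rw [sum_abs_concatCopies, concatCopies_dotProduct, ← h₀, mul_left_comm]

end L1Duality

namespace AugmentationExample

variable (δ : ℝ)

-- `θStd` and `θAug` are one block of the paper's `θ̂_std` and `θ̂_aug`.
def x₁ : Fin 3 → ℝ := ![1 + δ, 1, 0]
def x₂ : Fin 3 → ℝ := ![0, 1, 1 + δ]
def x₃ : Fin 3 → ℝ := ![1 + δ, 0, 1]
noncomputable def θStd : Fin 3 → ℝ := ![(2 + δ) / (1 + δ), 0, 0]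
def θAug : Fin 3 → ℝ := ![0, 2 + δ, 0]

variable {δ}

theorem x₁_dotProduct_θStd (hδ : 1 + δ ≠ 0) : x₁ δ ⬝ᵥ θStd δ = x₁ δ ⬝ᵥ 1 := by
  simp [x₁, θStd, dotProduct, Fin.sum_univ_three]
  field_simp
  ring

theorem x₁_dotProduct_θAug : x₁ δ ⬝ᵥ θAug δ = x₁ δ ⬝ᵥ 1 := by
  simp [x₁, θAug, dotProduct, Fin.sum_univ_three]
  ring

theorem x₂_dotProduct_θAug : x₂ δ ⬝ᵥ θAug δ = x₂ δ ⬝ᵥ 1 := by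
  simp [x₂, θAug, dotProduct, Fin.sum_univ_three]
  ring

theorem x₂_dotProduct_θStd_sub : x₂ δ ⬝ᵥ θStd δ - x₂ δ ⬝ᵥ 1 = -(2 + δ) := by
  simp [x₂, θStd, dotProduct, Fin.sum_univ_three]
  ring

theorem x₃_dotProduct_θStd (hδ : 1 + δ ≠ 0) : x₃ δ ⬝ᵥ θStd δ = x₃ δ ⬝ᵥ 1 := by
  simp [x₃, θStd, dotProduct, Fin.sum_univ_three]
  field_simp
  ring

theorem x₃_dotProduct_θAug_sub : x₃ δ ⬝ᵥ θAug δ - x₃ δ ⬝ᵥ 1 = -(2 + δ) := by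
  simp [x₃, θAug, dotProduct, Fin.sum_univ_three]
  ring

variable {d : ℕ}

theorem sum_abs_concatCopies_θStd_le (hδ : 0 ≤ δ) {θ : Fin d × Fin 3 → ℝ}
    (h : concatCopies d (x₁ δ) ⬝ᵥ θ = concatCopies d (x₁ δ) ⬝ᵥ concatCopies d (θStd δ)) :
    ∑ q, |concatCopies d (θStd δ) q| ≤ ∑ q, |θ q| := by
  have hδ' : 0 < 1 + δ := by linarith
  have h2δ : 0 < 2 + δ := by linarith
  refine sum_abs_concatCopies_le_of_dotProduct_eq hδ' (fun i => ?_) ?_ h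
  · fin_cases i <;> simp [x₁, abs_of_pos hδ'] <;> linarith
  · simp [x₁, θStd, Fin.sum_univ_three, abs_div, abs_of_pos hδ', abs_of_pos h2δ]

theorem sum_abs_concatCopies_θAug_le (hδ₀ : 0 ≤ δ) (hδ₁ : δ ≤ 1) {θ : Fin d × Fin 3 → ℝ}
    (h₁ : concatCopies d (x₁ δ) ⬝ᵥ θ = concatCopies d (x₁ δ) ⬝ᵥ concatCopies d (θAug δ))
    (h₂ : concatCopies d (x₂ δ) ⬝ᵥ θ = concatCopies d (x₂ δ) ⬝ᵥ concatCopies d (θAug δ)) :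
    ∑ q, |concatCopies d (θAug δ) q| ≤ ∑ q, |θ q| := by
  have hδ' : 0 < 1 + δ := by linarith
  have h2δ : 0 < 2 + δ := by linarith
  refine sum_abs_concatCopies_le_of_dotProduct_eq two_pos (x := x₁ δ + x₂ δ) (fun i => ?_) ?_ ?_
  · fin_cases i <;> simp [x₁, x₂, abs_of_pos hδ'] <;> norm_num <;> linarith
  · simp only [x₁, x₂, θAug, Fin.sum_univ_three, dotProduct, Pi.add_apply, cons_val_zero,
      cons_val_one, cons_val_two, tail_cons, head_cons, abs_zero, abs_of_pos h2δ]
    ring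
  · rw [concatCopies_add, add_dotProduct, add_dotProduct, h₁, h₂]

end AugmentationExample

open AugmentationExample

theorem l1_concatenated_errors_general (d : ℕ) (hd : 1 ≤ d) (δ p ε : ℝ)
    (h0 : 0 < δ) (h1 : δ < 1) (hε : 0 < ε) :
    let x1 : Fin d × Fin 3 → ℝ := fun q => ![1 + δ, 1, 0] q.2
    let x2 : Fin d × Fin 3 → ℝ := fun q => ![0, 1, 1 + δ] q.2
    let x3 : Fin d × Fin 3 → ℝ := fun q => ![1 + δ, 0, 1] q.2
    let θstar : Fin d × Fin 3 → ℝ := fun _ => 1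
    let θstd : Fin d × Fin 3 → ℝ := fun q => ![(2 + δ) / (1 + δ), 0, 0] q.2
    let θaug : Fin d × Fin 3 → ℝ := fun q => ![0, 2 + δ, 0] q.2
    let l1 : (Fin d × Fin 3 → ℝ) → ℝ := fun θ => ∑ i, |θ i|
    let E : (Fin d × Fin 3 → ℝ) → ℝ := fun θ =>
      (1 - p) * (x1 ⬝ᵥ θ - x1 ⬝ᵥ θstar) ^ 2 + ε * (x2 ⬝ᵥ θ - x2 ⬝ᵥ θstar) ^ 2 +
        (p - ε) * (x3 ⬝ᵥ θ - x3 ⬝ᵥ θstar) ^ 2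
    (x1 ⬝ᵥ θstd = x1 ⬝ᵥ θstar ∧
        ∀ θ : Fin d × Fin 3 → ℝ, x1 ⬝ᵥ θ = x1 ⬝ᵥ θstar → l1 θstd ≤ l1 θ) ∧
      (x1 ⬝ᵥ θaug = x1 ⬝ᵥ θstar ∧ x2 ⬝ᵥ θaug = x2 ⬝ᵥ θstar ∧
        ∀ θ : Fin d × Fin 3 → ℝ,
          x1 ⬝ᵥ θ = x1 ⬝ᵥ θstar → x2 ⬝ᵥ θ = x2 ⬝ᵥ θstar → l1 θaug ≤ l1 θ) ∧
      E θstd = ε * (d : ℝ) ^ 2 * (2 + δ) ^ 2 ∧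
      E θaug = (p - ε) * (d : ℝ) ^ 2 * (2 + δ) ^ 2 ∧
      E θaug / E θstd = (p - ε) / ε := by
  intro x1 x2 x3 θstar θstd θaug l1 E
  have hδ : 0 < 1 + δ := by linarith
  have std₁ : x1 ⬝ᵥ θstd = x1 ⬝ᵥ θstar := concatCopies_dotProduct_eq d (x₁_dotProduct_θStd hδ.ne')
  have std₂ : x2 ⬝ᵥ θstd - x2 ⬝ᵥ θstar = d * -(2 + δ) :=
    (concatCopies_dotProduct_sub d (x₂ δ) (θStd δ) 1).trans (congrArg _ x₂_dotProduct_θStd_sub)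
  have std₃ : x3 ⬝ᵥ θstd = x3 ⬝ᵥ θstar := concatCopies_dotProduct_eq d (x₃_dotProduct_θStd hδ.ne')
  have aug₁ : x1 ⬝ᵥ θaug = x1 ⬝ᵥ θstar := concatCopies_dotProduct_eq d x₁_dotProduct_θAug
  have aug₂ : x2 ⬝ᵥ θaug = x2 ⬝ᵥ θstar := concatCopies_dotProduct_eq d x₂_dotProduct_θAug
  have aug₃ : x3 ⬝ᵥ θaug - x3 ⬝ᵥ θstar = d * -(2 + δ) :=
    (concatCopies_dotProduct_sub d (x₃ δ) (θAug δ) 1).trans (congrArg _ x₃_dotProduct_θAug_sub)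
  have hEstd : E θstd = ε * d ^ 2 * (2 + δ) ^ 2 := by
    simp only [E, sub_eq_zero.mpr std₁, std₂, sub_eq_zero.mpr std₃]
    ring
  have hEaug : E θaug = (p - ε) * d ^ 2 * (2 + δ) ^ 2 := by
    simp only [E, sub_eq_zero.mpr aug₁, sub_eq_zero.mpr aug₂, aug₃]
    ring
  refine ⟨⟨std₁, fun θ h => sum_abs_concatCopies_θStd_le h0.le (h.trans std₁.symm)⟩,
    ⟨aug₁, aug₂, fun θ h₁ h₂ =>
      sum_abs_concatCopies_θAug_le h0.le h1.le (h₁.trans aug₁.symm) (h₂.trans aug₂.symm)⟩,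
    hEstd, hEaug, ?_⟩
  have hd' : (d : ℝ) ≠ 0 := by exact_mod_cast Nat.one_le_iff_ne_zero.mp hd
  rw [hEstd, hEaug]
  field_simp

/-- Appendix (minimum ℓ1-norm example), general `d`: with `d`-fold concatenated inputs,
the concatenated estimators are minimum ℓ1-norm interpolants of the respective
constraints, and the standard errors under the three-point input distribution are
`ε d² (2+δ)²` and `(p−ε) d² (2+δ)²` respectively, with ratio `(p−ε)/ε`. -/
theorem l1_concatenated_errors (d : ℕ) (hd : 1 ≤ d) (δ p ε : ℝ)
    (h0 : 0 < δ) (h1 : δ < 1) (hε : 0 < ε) (hεp : ε < p) (hp : p < 1) :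
    let x1 : Fin d × Fin 3 → ℝ := fun q => ![1 + δ, 1, 0] q.2
    let x2 : Fin d × Fin 3 → ℝ := fun q => ![0, 1, 1 + δ] q.2
    let x3 : Fin d × Fin 3 → ℝ := fun q => ![1 + δ, 0, 1] q.2
    let θstar : Fin d × Fin 3 → ℝ := fun _ => 1
    let θstd : Fin d × Fin 3 → ℝ := fun q => ![(2 + δ) / (1 + δ), 0, 0] q.2
    let θaug : Fin d × Fin 3 → ℝ := fun q => ![0, 2 + δ, 0] q.2
    let l1 : (Fin d × Fin 3 → ℝ) → ℝ := fun θ => ∑ i, |θ i|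
    let E : (Fin d × Fin 3 → ℝ) → ℝ := fun θ =>
      (1 - p) * (x1 ⬝ᵥ θ - x1 ⬝ᵥ θstar) ^ 2 + ε * (x2 ⬝ᵥ θ - x2 ⬝ᵥ θstar) ^ 2 +
        (p - ε) * (x3 ⬝ᵥ θ - x3 ⬝ᵥ θstar) ^ 2
    (x1 ⬝ᵥ θstd = x1 ⬝ᵥ θstar ∧
        ∀ θ : Fin d × Fin 3 → ℝ, x1 ⬝ᵥ θ = x1 ⬝ᵥ θstar → l1 θstd ≤ l1 θ) ∧
      (x1 ⬝ᵥ θaug = x1 ⬝ᵥ θstar ∧ x2 ⬝ᵥ θaug = x2 ⬝ᵥ θstar ∧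
        ∀ θ : Fin d × Fin 3 → ℝ,
          x1 ⬝ᵥ θ = x1 ⬝ᵥ θstar → x2 ⬝ᵥ θ = x2 ⬝ᵥ θstar → l1 θaug ≤ l1 θ) ∧
      E θstd = ε * (d : ℝ) ^ 2 * (2 + δ) ^ 2 ∧
      E θaug = (p - ε) * (d : ℝ) ^ 2 * (2 + δ) ^ 2 ∧
      E θaug / E θstd = (p - ε) / ε :=
  l1_concatenated_errors_general d hd δ p ε h0 h1 hε
end
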